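/- In the star network setting, letting λ_{j,θ} denote the (unique) Lagrange multipliers satisfying the KKT conditions at θ and σ_θ := Σ_{j=1}^J λ_{j,θ}: if θ > 0 and σ_θ ≤ θ, then the right-hand slope of σ at θ is at most one, i.e., there exists ε > 0 such that for all θ' with θ ≤ θ' ≤ θ + ε, σ_{θ'} − σ_θ ≤ θ' − θ. -/

import Mathlib

/-- The star network setting of Abhishek–Hajek. -/
structure StarSetting where
  /-- number of arms -/
  J : ℕ
  hJ : 0 < J
  /-- number of leaf items on arm `j` -/
  n : Fin J → ℕ
  hn : ∀ j, 0 < n j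
  /-- winning single-item bids -/
  b : (j : Fin J) → Fin (n j) → ℝ
  /-- losing single-item bids -/
  bl : (j : Fin J) → Fin (n j) → ℝ
  /-- losing single-item bid for item zero -/
  bl0 : ℝ
  /-- package bids -/
  C : Fin J → ℝ
  h_bid : ∀ j k, bl j k ≤ b j k
  h_pos : ∀ j, ∃ k, bl j k < b j k

namespace StarSetting

/-- Index of items (= winning buyers): `none` is item zero, `some ⟨j,k⟩` is item `(j,k)`. -/
abbrev Idx (S : StarSetting) := Option ((j : Fin S.J) × Fin (S.n j))

variable (S : StarSetting)

noncomputable def Δ (j : Fin S.J) (k : Fin (S.n j)) : ℝ := S.b j k - S.bl j k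

noncomputable def Δmax (j : Fin S.J) : ℝ :=
  Finset.univ.sup' ⟨⟨0, S.hn j⟩, Finset.mem_univ _⟩ (S.Δ j)

noncomputable def v0 : ℝ :=
  max S.bl0 (Finset.univ.sup' ⟨⟨0, S.hJ⟩, Finset.mem_univ _⟩
    fun j => S.C j - ∑ k, S.b j k)

noncomputable def η (j : Fin S.J) : ℝ := S.v0 + (∑ k, S.b j k) - S.C j

/-- The Vikrey price vector `v_θ`. -/
noncomputable def vick (θ : ℝ) : EuclideanSpace ℝ S.Idx :=
  WithLp.toLp 2 fun i => Option.elim i S.v0 fun jk => max (S.b jk.1 jk.2 - S.η jk.1 - θ) (S.bl jk.1 jk.2)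

/-- The core region `K_θ`. -/
def coreK (θ : ℝ) : Set (EuclideanSpace ℝ S.Idx) :=
  { p | (∀ j, S.C j ≤ p none + ∑ k, p (some ⟨j, k⟩)) ∧
        (∀ j k, S.bl j k ≤ p (some ⟨j, k⟩) ∧ p (some ⟨j, k⟩) ≤ S.b j k) ∧
        S.v0 ≤ p none ∧ p none ≤ S.v0 + θ }

/-- The expanded core region (IR constraint of buyer zero dropped). -/
def expandedK : Set (EuclideanSpace ℝ S.Idx) :=
  { p | (∀ j, S.C j ≤ p none + ∑ k, p (some ⟨j, k⟩)) ∧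
        (∀ j k, S.bl j k ≤ p (some ⟨j, k⟩) ∧ p (some ⟨j, k⟩) ≤ S.b j k) ∧
        S.v0 ≤ p none }

/-- The KKT conditions at `θ` for the projection onto the expanded core. -/
def KKT (θ : ℝ) (p : EuclideanSpace ℝ S.Idx) (lam : Fin S.J → ℝ) : Prop :=
  (∀ j, 0 ≤ lam j) ∧
  p none = S.v0 + ∑ j, lam j ∧
  (∀ j k, p (some ⟨j, k⟩) = min (S.vick θ (some ⟨j, k⟩) + lam j) (S.b j k)) ∧
  (∀ j, ∑ k, max (min (S.η j + θ) (S.Δ j k) - lam j) 0 ≤ (∑ i, lam i) + S.η j) ∧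
  (∀ j, 0 < lam j → (∑ i, lam i) + S.η j = ∑ k, max (min (S.η j + θ) (S.Δ j k) - lam j) 0)

/-- The seller's revenue for a winner price vector. -/
noncomputable def revenue (p : EuclideanSpace ℝ S.Idx) : ℝ :=
  p none + ∑ j, ∑ k, p (some ⟨j, k⟩)

/-- The minimum revenue core at `θ`. -/
def MRC (θ : ℝ) : Set (EuclideanSpace ℝ S.Idx) :=
  { p | p ∈ S.coreK θ ∧ ∀ q ∈ S.coreK θ, S.revenue p ≤ S.revenue q }

end StarSetting

/-- `q` is a point of `A` nearest to `v` (Euclidean projection of `v` onto `A`). -/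
def IsProjOn {E : Type*} [NormedAddCommGroup E] (A : Set E) (v q : E) : Prop :=
  q ∈ A ∧ ∀ r ∈ A, dist v q ≤ dist v r

/-- `f` is piecewise linear on `[0, ∞)`: there are finitely many breakpoints
`0 = t 0 < t 1 < ⋯ < t m` such that `f` is affine on each `[t i, t (i+1)]` and on `[t m, ∞)`. -/
def PiecewiseLinearOnIci (f : ℝ → ℝ) : Prop :=
  ∃ m : ℕ, ∃ t : Fin (m + 1) → ℝ, t 0 = 0 ∧ StrictMono t ∧
    (∀ i : Fin m, ∃ a c : ℝ, ∀ x ∈ Set.Icc (t i.castSucc) (t i.succ), f x = a * x + c) ∧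
    (∃ a c : ℝ, ∀ x ∈ Set.Ici (t (Fin.last m)), f x = a * x + c)


/-!
Write `σ_θ = ∑ⱼ λ_{j,θ}` and `g_j(θ, μ) = ∑ₖ max (min (η_j + θ) Δ_{j,k} - μ) 0`, so that the KKT
conditions read `g_j(θ, λ_j) ≤ σ_θ + η_j`, with equality when `λ_j > 0`. The slope bound in fact
holds for every `θ' ≥ θ`. Let `ρ = σ_{θ'} - σ_θ > 0`, `δ = θ' - θ`, and let `u_j` be the number of
items `k` with `η_j + θ < Δ_{j,k}`. On an arm whose multiplier grows by `d_j > 0`, the equality at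
`θ'` and the inequality at `θ` give `ρ ≤ u_j (δ - d_j)`, while the inequality at `θ` alone gives
`u_j (θ - λ_j) ≤ σ_θ`. Eliminating `u_j` yields `(θ - λ_j) ρ ≤ σ_θ (δ - d_j)`; summing over the
growing arms, which carry at most `σ_θ` of the old multipliers and at least `ρ` of the increase,
gives `θ ρ ≤ σ_θ δ ≤ θ δ`.
-/

open Finset

lemma max_min_sub_zero_le {a a' D μ μ' : ℝ} (hμ : μ ≤ μ') :
    max (min a' D - μ') 0 ≤
      max (min a D - μ) 0 + if a < D then max (a' - a - (μ' - μ)) 0 else 0 := by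
  split_ifs with haD
  · rw [min_eq_left haD.le]
    have := min_le_left a' D
    refine max_le ?_ (by positivity)
    linarith [le_max_left (a - μ) 0, le_max_left (a' - a - (μ' - μ)) 0]
  · rw [min_eq_right (not_lt.mp haD), add_zero]
    exact max_le_max (by linarith [min_le_right a' D]) le_rfl

lemma ite_sub_le_max_min_sub_zero (a D μ : ℝ) :
    (if a < D then a - μ else 0) ≤ max (min a D - μ) 0 := by
  split_ifs with haD
  · rw [min_eq_left haD.le]
    exact le_max_left _ _
  · exact le_max_right _ _

section Multipliers

variable {ι : Type*} {κ : ι → Type*} [∀ j, Fintype (κ j)] (η : ι → ℝ) (Δ : (j : ι) → κ j → ℝ)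

noncomputable def armExcess (j : ι) (θ μ : ℝ) : ℝ :=
  ∑ k, max (min (η j + θ) (Δ j k) - μ) 0

noncomputable def unsaturated (j : ι) (θ : ℝ) : Finset (κ j) :=
  {k | η j + θ < Δ j k}

variable {η Δ}

lemma armExcess_le_add {j : ι} {θ θ' μ μ' : ℝ} (hμ : μ ≤ μ') :
    armExcess η Δ j θ' μ' ≤
      armExcess η Δ j θ μ + #(unsaturated η Δ j θ) * max (θ' - θ - (μ' - μ)) 0 := by
  have hsum : ∑ k, (if η j + θ < Δ j k then max (θ' - θ - (μ' - μ)) 0 else 0) =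
      #(unsaturated η Δ j θ) * max (θ' - θ - (μ' - μ)) 0 := by
    rw [← sum_filter, sum_const, nsmul_eq_mul, unsaturated]
  calc armExcess η Δ j θ' μ'
      ≤ ∑ k, (max (min (η j + θ) (Δ j k) - μ) 0 +
          if η j + θ < Δ j k then max (η j + θ' - (η j + θ) - (μ' - μ)) 0 else 0) :=
        sum_le_sum fun k _ => max_min_sub_zero_le hμ
    _ = _ := by
        rw [sum_add_distrib, ← hsum, armExcess]
        simp only [add_sub_add_left_eq_sub]

lemma card_unsaturated_mul_le_armExcess (j : ι) (θ μ : ℝ) :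
    #(unsaturated η Δ j θ) * (η j + θ - μ) ≤ armExcess η Δ j θ μ := by
  calc (#(unsaturated η Δ j θ) : ℝ) * (η j + θ - μ)
      = ∑ k, if η j + θ < Δ j k then η j + θ - μ else 0 := by
        rw [← sum_filter, sum_const, nsmul_eq_mul, unsaturated]
    _ ≤ armExcess η Δ j θ μ := sum_le_sum fun k _ => ite_sub_le_max_min_sub_zero _ _ _

variable [Fintype ι]

variable (η Δ) in
/-- The multiplier part of `StarSetting.KKT`. -/
structure IsKKTMultiplier (θ : ℝ) (lam : ι → ℝ) : Prop where
  nonneg : ∀ j, 0 ≤ lam j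
  armExcess_le : ∀ j, armExcess η Δ j θ (lam j) ≤ ∑ i, lam i + η j
  armExcess_eq : ∀ j, 0 < lam j → armExcess η Δ j θ (lam j) = ∑ i, lam i + η j

namespace IsKKTMultiplier

variable {θ θ' : ℝ} {lam lam' : ι → ℝ}

lemma sum_nonneg (h : IsKKTMultiplier η Δ θ lam) : 0 ≤ ∑ i, lam i :=
  Finset.sum_nonneg fun i _ => h.nonneg i

lemma sum_sub_sum_le_card_mul (h : IsKKTMultiplier η Δ θ lam)
    (h' : IsKKTMultiplier η Δ θ' lam') {j : ι} (hj : lam j < lam' j) :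
    ∑ i, lam' i - ∑ i, lam i ≤
      #(unsaturated η Δ j θ) * max (θ' - θ - (lam' j - lam j)) 0 := by
  have heq := h'.armExcess_eq j ((h.nonneg j).trans_lt hj)
  linarith [h.armExcess_le j,
    armExcess_le_add (η := η) (Δ := Δ) (j := j) (θ := θ) (θ' := θ') hj.le]

lemma sub_mul_sum_sub_sum_le (hη : ∀ j, 0 ≤ η j) (h : IsKKTMultiplier η Δ θ lam)
    (h' : IsKKTMultiplier η Δ θ' lam') (hσ : ∑ i, lam i < ∑ i, lam' i) {j : ι}
    (hj : lam j < lam' j) :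
    (θ - lam j) * (∑ i, lam' i - ∑ i, lam i) ≤
      (∑ i, lam i) * (θ' - θ - (lam' j - lam j)) := by
  have hgrow := h.sum_sub_sum_le_card_mul h' hj
  set σ := ∑ i, lam i
  set ρ := ∑ i, lam' i - σ
  set u := #(unsaturated η Δ j θ)
  have hρ : 0 < ρ := sub_pos.mpr hσ
  have hu : 0 < u := by
    by_contra! hu
    rw [Nat.le_zero.mp hu, Nat.cast_zero, zero_mul] at hgrow
    linarith
  have hgap : 0 < θ' - θ - (lam' j - lam j) := by
    by_contra! hgap
    rw [max_eq_right hgap, mul_zero] at hgrow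
    linarith
  rw [max_eq_left hgap.le] at hgrow
  have hu1 : (1 : ℝ) ≤ u := by exact_mod_cast hu
  have hlow : u * (θ - lam j) ≤ σ := by
    linear_combination card_unsaturated_mul_le_armExcess (η := η) (Δ := Δ) j θ (lam j) +
      h.armExcess_le j + mul_le_mul_of_nonneg_right hu1 (hη j)
  refine le_of_mul_le_mul_left ?_ (Nat.cast_pos.mpr hu : (0 : ℝ) < u)
  calc u * ((θ - lam j) * ρ) = (u * (θ - lam j)) * ρ := by ring
    _ ≤ σ * ρ := mul_le_mul_of_nonneg_right hlow hρ.le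
    _ ≤ σ * (u * (θ' - θ - (lam' j - lam j))) := mul_le_mul_of_nonneg_left hgrow h.sum_nonneg
    _ = u * (σ * (θ' - θ - (lam' j - lam j))) := by ring

theorem sum_sub_sum_le (hη : ∀ j, 0 ≤ η j) (h : IsKKTMultiplier η Δ θ lam)
    (h' : IsKKTMultiplier η Δ θ' lam') (hθ : 0 < θ) (hθθ' : θ ≤ θ') (hσ : ∑ i, lam i ≤ θ) :
    ∑ i, lam' i - ∑ i, lam i ≤ θ' - θ := by
  set σ := ∑ i, lam i
  set ρ := ∑ i, lam' i - σ
  by_contra! hρδ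
  have hρ : 0 < ρ := by linarith
  set P : Finset ι := {j | lam j < lam' j}
  have hσP : ∑ j ∈ P, lam j ≤ σ :=
    sum_le_sum_of_subset_of_nonneg (subset_univ P) fun j _ _ => h.nonneg j
  have hρP : ρ ≤ ∑ j ∈ P, (lam' j - lam j) := by
    rw [show ρ = ∑ j, (lam' j - lam j) by simp only [ρ, σ, sum_sub_distrib],
      ← sum_filter_add_sum_filter_not univ (fun j => lam j < lam' j)]
    have : ∑ j ∈ univ.filter (fun j => ¬lam j < lam' j), (lam' j - lam j) ≤ 0 :=
      sum_nonpos fun j hj => by linarith [not_lt.mp (mem_filter.mp hj).2]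
    linarith
  have hP : 0 < (#P : ℝ) := by
    have : P.Nonempty := by
      by_contra! hP
      rw [hP, sum_empty] at hρP
      linarith
    exact_mod_cast this.card_pos
  have hsum : (θ * ρ - σ * (θ' - θ)) * #P ≤
      ρ * ∑ j ∈ P, lam j - σ * ∑ j ∈ P, (lam' j - lam j) := by
    rw [mul_comm, mul_sum, mul_sum, ← sum_sub_distrib, ← nsmul_eq_mul, ← sum_const]
    refine sum_le_sum fun j hj => ?_
    linear_combination h.sub_mul_sum_sub_sum_le hη h' (by linarith) (mem_filter.mp hj).2
  have hslope : θ * ρ ≤ σ * (θ' - θ) := by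
    refine sub_nonpos.mp (nonpos_of_mul_nonpos_left ?_ hP)
    linear_combination hsum + mul_le_mul_of_nonneg_left hσP hρ.le +
      mul_le_mul_of_nonneg_left hρP h.sum_nonneg
  linarith [mul_lt_mul_of_pos_left hρδ hθ, mul_le_mul_of_nonneg_right hσ (sub_nonneg.mpr hθθ')]

end IsKKTMultiplier

end Multipliers

namespace StarSetting

lemma η_nonneg (S : StarSetting) (j : Fin S.J) : 0 ≤ S.η j := by
  have : S.C j - ∑ k, S.b j k ≤ S.v0 :=
    (le_sup' (fun j => S.C j - ∑ k, S.b j k) (mem_univ j)).trans (le_max_right _ _)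
  rw [η]
  linarith

lemma KKT.isKKTMultiplier {S : StarSetting} {θ : ℝ} {p : EuclideanSpace ℝ S.Idx}
    {lam : Fin S.J → ℝ} (h : S.KKT θ p lam) : IsKKTMultiplier S.η S.Δ θ lam :=
  ⟨h.1, h.2.2.2.1, fun j hj => (h.2.2.2.2 j hj).symm⟩

end StarSetting

/-- if `θ > 0` and `σ_θ ≤ θ`, then the right-hand slope of `σ` at `θ` is at
most one. -/
theorem kkt_sigma_right_slope_le_one (S : StarSetting)
    (lam : ℝ → Fin S.J → ℝ)
    (hlam : ∀ θ : ℝ, 0 ≤ θ → ∃ p : EuclideanSpace ℝ S.Idx, S.KKT θ p (lam θ))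
    (θ : ℝ) (hθ : 0 < θ) (hσ : ∑ j, lam θ j ≤ θ) :
    ∃ ε : ℝ, 0 < ε ∧ ∀ θ' : ℝ, θ ≤ θ' → θ' ≤ θ + ε →
      (∑ j, lam θ' j) - (∑ j, lam θ j) ≤ θ' - θ := by
  refine ⟨1, one_pos, fun θ' hθθ' _ => ?_⟩
  obtain ⟨p, hp⟩ := hlam θ hθ.le
  obtain ⟨p', hp'⟩ := hlam θ' (hθ.le.trans hθθ')
  exact hp.isKKTMultiplier.sum_sub_sum_le S.η_nonneg hp'.isKKTMultiplier hθ hθθ' hσ
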